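/- (Finite-dimensional diminishing adaptation, Theorem 2.2 analogue.) Let d be a positive integer, R > 0, δ > 0, and let a : ℝ^d × ℝ^d → [0, 1] be measurable. For n ≥ 2 and points x₁, …, x_n ∈ ℝ^d with ‖x_i‖ ≤ R, let Σ_n = (1/(n−1)) ∑_{i=1}^{n} (x_i − x̄_n)(x_i − x̄_n)ᵀ + δ I with x̄_n = (1/n) ∑_{i=1}^{n} x_i, and define the Metropolis–Hastings-type kernel Q_n(u, A) = ∫_A a(u, v) φ_{Σ_n}(v − u) dv + 1_A(u)(1 − ∫_{ℝ^d} a(u, v) φ_{Σ_n}(v − u) dv). Then there exists a constant γ > 0, depending only on d, R, δ, such that for every n ≥ 2, every sequence x₁, …, x_{n+1} ∈ ℝ^d with ‖x_i‖ ≤ R, every u ∈ ℝ^d, and every measurable A ⊆ ℝ^d, |Q_n(u, A) − Q_{n+1}(u, A)| ≤ γ/n. -/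

import Mathlib

/-
The Gaussian density `φ_S` depends on `S` only through `det S` and `S⁻¹`. On symmetric
covariances with `S ≥ δ • 1` and entries bounded by `K`, both are Lipschitz in the entries of `S`
(expand the determinant over permutations; write `S⁻¹ - T⁻¹ = S⁻¹ (T - S) T⁻¹` with
`|S⁻¹ i j| ≤ δ⁻¹`), while `xᵀ S⁻¹ x ≥ δ / (K d)² ‖x‖²`. Hence, if the entries of `S` and `T`
differ by at most `ε`, then `|φ_S - φ_T|` is at most `ε` times a fixed integrable Gaussian, and
twice its integral bounds `|Q_S(u, A) - Q_T(u, A)|` uniformly in `a`, `u` and `A`. The regularized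
empirical covariances `Σ_n`, `Σ_{n+1}` of points in the ball of radius `R` lie in this class with
`K = δ + 8 R²`, and their entries differ by `O(R² / n)`.
-/

open MeasureTheory Finset Matrix

/-- The Lebesgue density of the centered Gaussian `N(0, S)` on `ℝ^d`. -/
noncomputable def gaussianPDF (d : ℕ) (S : Matrix (Fin d) (Fin d) ℝ)
    (x : Fin d → ℝ) : ℝ :=
  (2 * Real.pi) ^ (-(d : ℝ) / 2) * S.det ^ (-(1 : ℝ) / 2) *
    Real.exp (-(1 / 2) * (x ⬝ᵥ (S⁻¹ *ᵥ x)))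

/-- The Euclidean norm on `ℝ^d`. -/
noncomputable def eucNorm {d : ℕ} (y : Fin d → ℝ) : ℝ :=
  Real.sqrt (∑ j, y j ^ 2)

/-- The empirical mean of the first `n` points. -/
noncomputable def empMean (d n : ℕ) (x : ℕ → Fin d → ℝ) : Fin d → ℝ :=
  (n : ℝ)⁻¹ • ∑ i ∈ Finset.range n, x i

/-- The regularized empirical covariance
`Σ_n = (1/(n−1)) ∑_{i=1}^n (x_i − x̄_n)(x_i − x̄_n)ᵀ + δ I`. -/
noncomputable def empCov (d n : ℕ) (δ : ℝ) (x : ℕ → Fin d → ℝ) :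
    Matrix (Fin d) (Fin d) ℝ :=
  ((n : ℝ) - 1)⁻¹ •
      (∑ i ∈ Finset.range n,
        Matrix.vecMulVec (x i - empMean d n x) (x i - empMean d n x)) +
    δ • 1

/-- The Metropolis–Hastings-type transition probability with Gaussian random-walk
proposal `N(u, S)` and acceptance function `a`:
`Q(u, A) = ∫_A a(u,v) φ_S(v−u) dv + 1_A(u)(1 − ∫ a(u,v) φ_S(v−u) dv)`. -/
noncomputable def mhProb (d : ℕ) (a : (Fin d → ℝ) × (Fin d → ℝ) → ℝ)
    (S : Matrix (Fin d) (Fin d) ℝ) (u : Fin d → ℝ) (A : Set (Fin d → ℝ)) : ℝ :=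
  (∫ v in A, a (u, v) * gaussianPDF d S (v - u)) +
    Set.indicator A (fun _ => 1 - ∫ v, a (u, v) * gaussianPDF d S (v - u)) u

lemma rpow_neg_half_eq_inv_sqrt {a : ℝ} (ha : 0 ≤ a) : a ^ (-(1 : ℝ) / 2) = (√a)⁻¹ := by
  rw [neg_div, Real.rpow_neg ha, Real.sqrt_eq_rpow]

lemma abs_rpow_neg_half_sub_le {a b c : ℝ} (hc : 0 < c) (ha : c ≤ a) (hb : c ≤ b) :
    |a ^ (-(1 : ℝ) / 2) - b ^ (-(1 : ℝ) / 2)| ≤ |a - b| / (2 * √c * c) := by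
  rw [rpow_neg_half_eq_inv_sqrt (hc.le.trans ha), rpow_neg_half_eq_inv_sqrt (hc.le.trans hb)]
  have hsc : 0 < √c := Real.sqrt_pos.mpr hc
  have hca : √c ≤ √a := Real.sqrt_le_sqrt ha
  have hcb : √c ≤ √b := Real.sqrt_le_sqrt hb
  have hsa : 0 < √a := hsc.trans_le hca
  have hsb : 0 < √b := hsc.trans_le hcb
  have key : (√a)⁻¹ - (√b)⁻¹ = (b - a) / ((√a + √b) * (√a * √b)) := by
    rw [eq_div_iff (by positivity)]
    field_simp
    nlinarith [Real.sq_sqrt (hc.le.trans ha), Real.sq_sqrt (hc.le.trans hb)]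
  have hden : 2 * √c * c ≤ (√a + √b) * (√a * √b) := by
    have hc' : c ≤ √a * √b := by
      rw [← Real.mul_self_sqrt hc.le]
      exact mul_le_mul hca hcb hsc.le hsa.le
    exact mul_le_mul (by linarith) hc' hc.le (by positivity)
  rw [key, abs_div, abs_of_pos (show 0 < (√a + √b) * (√a * √b) by positivity), abs_sub_comm]
  exact div_le_div_of_nonneg_left (abs_nonneg _) (by positivity) hden

lemma abs_exp_neg_sub_exp_neg_le {u v w : ℝ} (hu : w ≤ u) (hv : w ≤ v) :
    |Real.exp (-u) - Real.exp (-v)| ≤ Real.exp (-w) * |u - v| := by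
  wlog huv : u ≤ v generalizing u v
  · rw [abs_sub_comm, abs_sub_comm u]
    exact this hv hu (le_of_not_ge huv)
  have hsplit : Real.exp (-u) - Real.exp (-v) = Real.exp (-u) * (1 - Real.exp (-(v - u))) := by
    rw [mul_sub, mul_one, ← Real.exp_add]
    ring_nf
  have h1 : 1 - Real.exp (-(v - u)) ≤ v - u := by linarith [Real.add_one_le_exp (-(v - u))]
  have h2 : 0 ≤ 1 - Real.exp (-(v - u)) := by
    linarith [Real.exp_le_one_iff.mpr (show -(v - u) ≤ 0 by linarith)]
  rw [hsplit, abs_of_nonneg (mul_nonneg (Real.exp_nonneg _) h2), abs_sub_comm,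
    abs_of_nonneg (by linarith)]
  exact mul_le_mul (Real.exp_le_exp.mpr (by linarith)) h1 h2 (Real.exp_nonneg _)

lemma mul_exp_neg_two_mul_le {s : ℝ} (hs : 0 < s) (t : ℝ) :
    t * Real.exp (-(2 * s * t)) ≤ s⁻¹ * Real.exp (-(s * t)) := by
  have hsplit : Real.exp (-(2 * s * t)) = Real.exp (-(s * t)) * Real.exp (-(s * t)) := by
    rw [← Real.exp_add]; ring_nf
  have hlin : t * Real.exp (-(s * t)) ≤ s⁻¹ := by
    rw [Real.exp_neg, ← div_eq_mul_inv, div_le_iff₀ (Real.exp_pos _), inv_mul_eq_div,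
      le_div_iff₀' hs]
    linarith [Real.add_one_le_exp (s * t)]
  rw [hsplit, ← mul_assoc]
  exact mul_le_mul_of_nonneg_right hlin (Real.exp_nonneg _)

lemma abs_exp_neg_half_sub_le {m N η q r : ℝ} (hm : 0 < m) (hη : 0 ≤ η) (hq : m * N ≤ q)
    (hr : m * N ≤ r) (hqr : |q - r| ≤ η * N) :
    |Real.exp (-(1 / 2) * q) - Real.exp (-(1 / 2) * r)| ≤
      2 * η / m * Real.exp (-(m / 4) * N) := by
  calc |Real.exp (-(1 / 2) * q) - Real.exp (-(1 / 2) * r)|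
      ≤ Real.exp (-(m / 2 * N)) * |1 / 2 * q - 1 / 2 * r| := by
        simpa only [neg_mul] using
          abs_exp_neg_sub_exp_neg_le (w := m / 2 * N) (by linarith) (by linarith)
    _ ≤ Real.exp (-(m / 2 * N)) * (η * N / 2) := by
        rw [← mul_sub, abs_mul, abs_of_pos one_half_pos]
        gcongr
        linarith
    _ = η / 2 * (N * Real.exp (-(2 * (m / 4) * N))) := by ring_nf
    _ ≤ η / 2 * ((m / 4)⁻¹ * Real.exp (-(m / 4 * N))) :=
        mul_le_mul_of_nonneg_left (mul_exp_neg_two_mul_le (by positivity) N) (by positivity)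
    _ = _ := by ring_nf

section entrywise

variable {n : Type*} [Fintype n]

lemma abs_prod_sub_prod_le {ι : Type*} (s : Finset ι) {f g : ι → ℝ} {K : ℝ} (hK : 1 ≤ K)
    (hf : ∀ i ∈ s, |f i| ≤ K) (hg : ∀ i ∈ s, |g i| ≤ K) :
    |∏ i ∈ s, f i - ∏ i ∈ s, g i| ≤ (∑ i ∈ s, |f i - g i|) * K ^ #s := by
  classical
  induction s using Finset.induction_on with
  | empty => simp
  | @insert a s ha ih =>
    simp only [forall_mem_insert] at hf hg
    have hprod : |∏ i ∈ s, f i| ≤ K ^ #s := by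
      rw [abs_prod]
      exact (prod_le_prod (fun _ _ => abs_nonneg _) hf.2).trans_eq (prod_const K)
    have hpow : K ^ #s ≤ K ^ (#s + 1) := pow_le_pow_right₀ hK (Nat.le_succ _)
    rw [prod_insert ha, prod_insert ha, sum_insert ha, card_insert_of_notMem ha,
      show f a * ∏ i ∈ s, f i - g a * ∏ i ∈ s, g i
        = (f a - g a) * ∏ i ∈ s, f i + g a * (∏ i ∈ s, f i - ∏ i ∈ s, g i) by ring]
    calc _ ≤ |f a - g a| * K ^ #s + K * ((∑ i ∈ s, |f i - g i|) * K ^ #s) := by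
          refine (abs_add_le _ _).trans ?_
          rw [abs_mul, abs_mul]
          exact add_le_add (mul_le_mul_of_nonneg_left hprod (abs_nonneg _))
            (mul_le_mul hg.1 (ih hf.2 hg.2) (abs_nonneg _) (by linarith))
      _ ≤ (|f a - g a| + ∑ i ∈ s, |f i - g i|) * K ^ (#s + 1) := by
          have := mul_le_mul_of_nonneg_left hpow (abs_nonneg (f a - g a))
          rw [pow_succ] at this ⊢
          nlinarith

lemma abs_det_sub_det_le [DecidableEq n] {S T : Matrix n n ℝ} {K ε : ℝ} (hK : 1 ≤ K)
    (hS : ∀ i j, |S i j| ≤ K) (hT : ∀ i j, |T i j| ≤ K) (hST : ∀ i j, |S i j - T i j| ≤ ε) :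
    |S.det - T.det| ≤
      (Fintype.card n).factorial * (Fintype.card n * ε) * K ^ Fintype.card n := by
  have hterm (σ : Equiv.Perm n) :
      |Equiv.Perm.sign σ • ∏ i, S (σ i) i - Equiv.Perm.sign σ • ∏ i, T (σ i) i|
        ≤ Fintype.card n * ε * K ^ Fintype.card n := by
    have habs (y : ℝ) : |Equiv.Perm.sign σ • y| = |y| := by
      rcases Int.units_eq_one_or (Equiv.Perm.sign σ) with h | h <;> simp [h]
    have hdiag : ∑ i, |S (σ i) i - T (σ i) i| ≤ Fintype.card n * ε :=
      (sum_le_sum fun i _ => hST (σ i) i).trans_eq (by simp)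
    rw [← smul_sub, habs]
    refine (abs_prod_sub_prod_le univ hK (fun i _ => hS _ _) (fun i _ => hT _ _)).trans ?_
    rw [card_univ]
    gcongr
  rw [det_apply, det_apply, ← sum_sub_distrib]
  calc _ ≤ ∑ σ : Equiv.Perm n, Fintype.card n * ε * K ^ Fintype.card n :=
        (abs_sum_le_sum_abs _ _).trans (sum_le_sum fun σ _ => hterm σ)
    _ = _ := by simp [Fintype.card_perm, mul_assoc]

lemma abs_mul_apply_le {A B : Matrix n n ℝ} {a b : ℝ} (hA : ∀ i j, |A i j| ≤ a)
    (hB : ∀ i j, |B i j| ≤ b) (i j : n) : |(A * B) i j| ≤ Fintype.card n * (a * b) := by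
  have hterm (k : n) : |A i k * B k j| ≤ a * b := by
    rw [abs_mul]
    exact mul_le_mul (hA i k) (hB k j) (abs_nonneg _) ((abs_nonneg _).trans (hA i k))
  rw [mul_apply]
  exact (abs_sum_le_sum_abs _ _).trans ((sum_le_sum fun k _ => hterm k).trans_eq (by simp))

lemma abs_mulVec_apply_le {M : Matrix n n ℝ} {c : ℝ} (hM : ∀ i j, |M i j| ≤ c) (x : n → ℝ)
    (i : n) : |(M *ᵥ x) i| ≤ c * ∑ j, |x j| := by
  rw [mulVec, dotProduct, mul_sum]
  refine (abs_sum_le_sum_abs _ _).trans (sum_le_sum fun j _ => ?_)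
  rw [abs_mul]
  exact mul_le_mul_of_nonneg_right (hM i j) (abs_nonneg _)

lemma sq_sum_abs_le (x : n → ℝ) : (∑ i, |x i|) ^ 2 ≤ Fintype.card n * ∑ i, x i ^ 2 := by
  have := sq_sum_le_card_mul_sum_sq (s := univ) (f := fun i => |x i|)
  simpa only [sq_abs, card_univ] using this

lemma sum_sq_mulVec_le {M : Matrix n n ℝ} {c : ℝ} (hM : ∀ i j, |M i j| ≤ c) (x : n → ℝ) :
    ∑ i, (M *ᵥ x) i ^ 2 ≤ (c * Fintype.card n) ^ 2 * ∑ i, x i ^ 2 := by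
  have hrow (i : n) : (M *ᵥ x) i ^ 2 ≤ c ^ 2 * (∑ j, |x j|) ^ 2 := by
    rw [← mul_pow, ← sq_abs]
    exact pow_le_pow_left₀ (abs_nonneg _) (abs_mulVec_apply_le hM x i) 2
  calc _ ≤ ∑ _i : n, c ^ 2 * (∑ j, |x j|) ^ 2 := sum_le_sum fun i _ => hrow i
    _ ≤ Fintype.card n * (c ^ 2 * (Fintype.card n * ∑ i, x i ^ 2)) := by
        rw [sum_const, card_univ, nsmul_eq_mul]
        gcongr
        exact sq_sum_abs_le x
    _ = _ := by ring

lemma abs_dotProduct_mulVec_le {M : Matrix n n ℝ} {c : ℝ} (hc : 0 ≤ c)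
    (hM : ∀ i j, |M i j| ≤ c) (x : n → ℝ) :
    |x ⬝ᵥ M *ᵥ x| ≤ c * Fintype.card n * ∑ i, x i ^ 2 := by
  calc |x ⬝ᵥ M *ᵥ x| ≤ ∑ i, |x i| * (c * ∑ j, |x j|) := by
        refine (abs_sum_le_sum_abs _ _).trans (sum_le_sum fun i _ => ?_)
        rw [abs_mul]
        exact mul_le_mul_of_nonneg_left (abs_mulVec_apply_le hM x i) (abs_nonneg _)
    _ = c * (∑ i, |x i|) ^ 2 := by rw [← sum_mul]; ring
    _ ≤ c * (Fintype.card n * ∑ i, x i ^ 2) := by gcongr; exact sq_sum_abs_le x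
    _ = _ := by ring

end entrywise

section admissible

variable {n : Type*} [Fintype n] [DecidableEq n]

structure IsAdmissibleCov (δ K : ℝ) (S : Matrix n n ℝ) : Prop where
  isHermitian : S.IsHermitian
  coercive : ∀ x : n → ℝ, δ * ∑ i, x i ^ 2 ≤ x ⬝ᵥ S *ᵥ x
  abs_apply_le : ∀ i j, |S i j| ≤ K

namespace IsAdmissibleCov

variable {δ K ε : ℝ} {S T : Matrix n n ℝ}

lemma le_eigenvalues (hS : IsAdmissibleCov δ K S) (i : n) : δ ≤ hS.isHermitian.eigenvalues i := by
  set v := hS.isHermitian.eigenvectorBasis i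
  have hv : ∑ j, v j ^ 2 = 1 := by
    rw [← EuclideanSpace.real_norm_sq_eq, hS.isHermitian.eigenvectorBasis.orthonormal.1 i, one_pow]
  have hvv : (⇑v : n → ℝ) ⬝ᵥ ⇑v = 1 := by simpa [dotProduct, sq] using hv
  have := hS.coercive v
  rwa [hS.isHermitian.mulVec_eigenvectorBasis, dotProduct_smul, smul_eq_mul, hv, hvv, mul_one,
    mul_one] at this

lemma pow_card_le_det (hS : IsAdmissibleCov δ K S) (hδ : 0 ≤ δ) :
    δ ^ Fintype.card n ≤ S.det := by
  rw [hS.isHermitian.det_eq_prod_eigenvalues, ← card_univ, ← prod_const]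
  exact_mod_cast prod_le_prod (fun _ _ => hδ) fun i _ => hS.le_eigenvalues i

lemma det_pos (hS : IsAdmissibleCov δ K S) (hδ : 0 < δ) : 0 < S.det :=
  (pow_pos hδ _).trans_le (hS.pow_card_le_det hδ.le)

lemma mulVec_inv_mulVec (hS : IsAdmissibleCov δ K S) (hδ : 0 < δ) (x : n → ℝ) :
    S *ᵥ (S⁻¹ *ᵥ x) = x := by
  rw [mulVec_mulVec, mul_nonsing_inv S (isUnit_iff_ne_zero.mpr (hS.det_pos hδ).ne'), one_mulVec]

lemma abs_inv_apply_le (hS : IsAdmissibleCov δ K S) (hδ : 0 < δ) (i j : n) :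
    |S⁻¹ i j| ≤ δ⁻¹ := by
  set y := S⁻¹ *ᵥ Pi.single j 1
  set N := ∑ k, y k ^ 2
  have hyk (k : n) : y k = S⁻¹ k j := by simp [y, mulVec_single]
  have hyN (k : n) : y k ^ 2 ≤ N := single_le_sum (fun k _ => sq_nonneg (y k)) (mem_univ k)
  have hN0 : 0 ≤ N := sum_nonneg fun k _ => sq_nonneg (y k)
  -- `y` is the `j`-th column of `S⁻¹`: `δ N ≤ yᵀ S y = y j ≤ √N`, so `δ² N ≤ 1`.
  have hcoer : δ * N ≤ y j := by
    have := hS.coercive y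
    rwa [show S *ᵥ y = Pi.single j 1 from hS.mulVec_inv_mulVec hδ _, dotProduct_single,
      mul_one] at this
  have hsq : (δ * N) ^ 2 ≤ N := (pow_le_pow_left₀ (mul_nonneg hδ.le hN0) hcoer 2).trans (hyN j)
  have hN : δ ^ 2 * N ≤ 1 := by
    rcases hN0.eq_or_lt with h0 | hpos
    · simp [← h0]
    · nlinarith
  have hyi : (δ * |y i|) ^ 2 ≤ 1 ^ 2 := by
    rw [mul_pow, sq_abs, one_pow]
    exact (mul_le_mul_of_nonneg_left (hyN i) (sq_nonneg δ)).trans hN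
  rw [← hyk, ← mul_one δ⁻¹, le_inv_mul_iff₀ hδ]
  exact (pow_le_pow_iff_left₀ (by positivity) zero_le_one two_ne_zero).mp hyi

lemma inv_coercive (hS : IsAdmissibleCov δ K S) (hδ : 0 < δ) (x : n → ℝ) :
    δ / (K * Fintype.card n) ^ 2 * ∑ i, x i ^ 2 ≤ x ⬝ᵥ S⁻¹ *ᵥ x := by
  set y := S⁻¹ *ᵥ x
  have hx : S *ᵥ y = x := hS.mulVec_inv_mulVec hδ x
  have hform : x ⬝ᵥ y = y ⬝ᵥ S *ᵥ y := by rw [hx, dotProduct_comm]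
  have hnorm : ∑ i, x i ^ 2 ≤ (K * Fintype.card n) ^ 2 * ∑ i, y i ^ 2 := by
    rw [← hx]; exact sum_sq_mulVec_le hS.abs_apply_le y
  rw [hform]
  calc δ / (K * Fintype.card n) ^ 2 * ∑ i, x i ^ 2
      ≤ δ / (K * Fintype.card n) ^ 2 * ((K * Fintype.card n) ^ 2 * ∑ i, y i ^ 2) :=
        mul_le_mul_of_nonneg_left hnorm (by positivity)
    _ ≤ δ * ∑ i, y i ^ 2 := by
        rw [← mul_assoc, div_mul_eq_mul_div, mul_div_assoc]
        exact mul_le_mul_of_nonneg_right (mul_le_of_le_one_right hδ.le (div_self_le_one _))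
          (sum_nonneg fun _ _ => sq_nonneg _)
    _ ≤ y ⬝ᵥ S *ᵥ y := hS.coercive y

lemma det_rpow_neg_half_le (hS : IsAdmissibleCov δ K S) (hδ : 0 < δ) :
    S.det ^ (-(1 : ℝ) / 2) ≤ (√(δ ^ Fintype.card n))⁻¹ := by
  rw [rpow_neg_half_eq_inv_sqrt (hS.det_pos hδ).le]
  exact inv_anti₀ (by positivity) (Real.sqrt_le_sqrt (hS.pow_card_le_det hδ.le))

lemma abs_det_rpow_sub_le (hS : IsAdmissibleCov δ K S) (hT : IsAdmissibleCov δ K T) (hδ : 0 < δ)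
    (hST : ∀ i j, |S i j - T i j| ≤ ε) :
    |S.det ^ (-(1 : ℝ) / 2) - T.det ^ (-(1 : ℝ) / 2)| ≤
      (Fintype.card n).factorial * (Fintype.card n * ε) * max K 1 ^ Fintype.card n /
        (2 * √(δ ^ Fintype.card n) * δ ^ Fintype.card n) := by
  refine (abs_rpow_neg_half_sub_le (pow_pos hδ _) (hS.pow_card_le_det hδ.le)
    (hT.pow_card_le_det hδ.le)).trans ?_
  gcongr
  exact abs_det_sub_det_le (le_max_right _ _) (fun i j => (hS.abs_apply_le i j).trans
    (le_max_left _ _)) (fun i j => (hT.abs_apply_le i j).trans (le_max_left _ _)) hST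

lemma abs_inv_quadForm_sub_le (hS : IsAdmissibleCov δ K S) (hT : IsAdmissibleCov δ K T)
    (hδ : 0 < δ) (hε : 0 ≤ ε) (hST : ∀ i j, |S i j - T i j| ≤ ε) (x : n → ℝ) :
    |x ⬝ᵥ S⁻¹ *ᵥ x - x ⬝ᵥ T⁻¹ *ᵥ x| ≤ Fintype.card n ^ 3 / δ ^ 2 * ε * ∑ i, x i ^ 2 := by
  have hinv : S⁻¹ - T⁻¹ = S⁻¹ * (T - S) * T⁻¹ := by
    rw [mul_sub, sub_mul, mul_assoc, mul_nonsing_inv T, mul_one,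
      nonsing_inv_mul S, one_mul]
    · exact isUnit_iff_ne_zero.mpr (hS.det_pos hδ).ne'
    · exact isUnit_iff_ne_zero.mpr (hT.det_pos hδ).ne'
  have hTS (i j : n) : |(T - S) i j| ≤ ε := by rw [Matrix.sub_apply, abs_sub_comm]; exact hST i j
  have hentry (i j : n) : |(S⁻¹ - T⁻¹) i j| ≤
      Fintype.card n * (Fintype.card n * (δ⁻¹ * ε) * δ⁻¹) := by
    rw [hinv]
    exact abs_mul_apply_le (abs_mul_apply_le (hS.abs_inv_apply_le hδ) hTS)
      (hT.abs_inv_apply_le hδ) i j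
  rw [← dotProduct_sub, ← sub_mulVec]
  refine (abs_dotProduct_mulVec_le (by positivity) hentry x).trans_eq ?_
  field_simp

end IsAdmissibleCov

end admissible

lemma abs_setIntegral_add_indicator_sub_le {α : Type*} [MeasurableSpace α] {μ : Measure α}
    {f g : α → ℝ} (hf : Integrable f μ) (hg : Integrable g μ) (A : Set α) (u : α) :
    |((∫ v in A, f v ∂μ) + A.indicator (fun _ => 1 - ∫ v, f v ∂μ) u) -
        ((∫ v in A, g v ∂μ) + A.indicator (fun _ => 1 - ∫ v, g v ∂μ) u)| ≤
      2 * ∫ v, |f v - g v| ∂μ := by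
  set a₁ := ∫ v in A, f v ∂μ
  set b₁ := ∫ v in A, g v ∂μ
  set a₂ := ∫ v, f v ∂μ
  set b₂ := ∫ v, g v ∂μ
  have hset : |a₁ - b₁| ≤ ∫ v, |f v - g v| ∂μ := by
    rw [← integral_sub hf.integrableOn hg.integrableOn]
    exact abs_integral_le_integral_abs.trans
      (setIntegral_le_integral (hf.sub hg).abs (ae_of_all _ fun _ => abs_nonneg _))
  have htot : |a₂ - b₂| ≤ ∫ v, |f v - g v| ∂μ := by
    rw [← integral_sub hf hg]
    exact abs_integral_le_integral_abs
  by_cases hu : u ∈ A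
  · simp only [Set.indicator_of_mem hu]
    calc |a₁ + (1 - a₂) - (b₁ + (1 - b₂))| = |(a₁ - b₁) - (a₂ - b₂)| := by ring_nf
      _ ≤ |a₁ - b₁| + |a₂ - b₂| := abs_sub _ _
      _ ≤ _ := by linarith
  · simp only [Set.indicator_of_notMem hu, add_zero]
    have : 0 ≤ ∫ v, |f v - g v| ∂μ := integral_nonneg fun v => abs_nonneg (f v - g v)
    linarith

section gaussian

variable {d : ℕ} {δ K : ℝ}

lemma integrable_exp_neg_mul_sum_sq {c : ℝ} (hc : 0 < c) :
    Integrable (fun x : Fin d → ℝ => Real.exp (-c * ∑ i, x i ^ 2)) := by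
  simp_rw [mul_sum, Real.exp_sum]
  exact Integrable.fintype_prod fun _ => integrable_exp_neg_mul_sq hc

lemma measurable_gaussianPDF (S : Matrix (Fin d) (Fin d) ℝ) : Measurable (gaussianPDF d S) := by
  unfold gaussianPDF
  fun_prop

lemma exp_neg_half_inv_quadForm_le {S : Matrix (Fin d) (Fin d) ℝ} (hS : IsAdmissibleCov δ K S)
    (hδ : 0 < δ) (x : Fin d → ℝ) :
    Real.exp (-(1 / 2) * (x ⬝ᵥ S⁻¹ *ᵥ x)) ≤
      Real.exp (-(δ / (K * d) ^ 2 / 4) * ∑ i, x i ^ 2) := by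
  have hq : δ / (K * d) ^ 2 * ∑ i, x i ^ 2 ≤ x ⬝ᵥ S⁻¹ *ᵥ x := by
    simpa using hS.inv_coercive hδ x
  have hN : 0 ≤ δ / (K * d) ^ 2 * ∑ i, x i ^ 2 := by positivity
  exact Real.exp_le_exp.mpr (by linarith)

lemma abs_gaussianPDF_le {S : Matrix (Fin d) (Fin d) ℝ} (hS : IsAdmissibleCov δ K S) (hδ : 0 < δ)
    (x : Fin d → ℝ) :
    |gaussianPDF d S x| ≤ (2 * Real.pi) ^ (-(d : ℝ) / 2) * (√(δ ^ d))⁻¹ *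
      Real.exp (-(δ / (K * d) ^ 2 / 4) * ∑ i, x i ^ 2) := by
  have hdet : S.det ^ (-(1 : ℝ) / 2) ≤ (√(δ ^ d))⁻¹ := by
    simpa using hS.det_rpow_neg_half_le hδ
  rw [gaussianPDF, abs_of_nonneg (by have := hS.det_pos hδ; positivity)]
  exact mul_le_mul (mul_le_mul_of_nonneg_left hdet (by positivity))
    (exp_neg_half_inv_quadForm_le hS hδ x) (by positivity) (by positivity)

lemma abs_exp_neg_half_inv_quadForm_sub_le (hd : 0 < d) (hδ : 0 < δ) (hK : 0 < K) {ε : ℝ}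
    {S T : Matrix (Fin d) (Fin d) ℝ} (hS : IsAdmissibleCov δ K S) (hT : IsAdmissibleCov δ K T)
    (hε : 0 ≤ ε) (hST : ∀ i j, |S i j - T i j| ≤ ε) (x : Fin d → ℝ) :
    |Real.exp (-(1 / 2) * (x ⬝ᵥ S⁻¹ *ᵥ x)) - Real.exp (-(1 / 2) * (x ⬝ᵥ T⁻¹ *ᵥ x))| ≤
      2 * (d ^ 3 / δ ^ 2 * ε) / (δ / (K * d) ^ 2) *
        Real.exp (-(δ / (K * d) ^ 2 / 4) * ∑ i, x i ^ 2) :=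
  abs_exp_neg_half_sub_le (by positivity) (by positivity) (by simpa using hS.inv_coercive hδ x)
    (by simpa using hT.inv_coercive hδ x) (by simpa using hS.abs_inv_quadForm_sub_le hT hδ hε hST x)

lemma integrable_mul_gaussianPDF_sub (hd : 0 < d) (hδ : 0 < δ) (hK : 0 < K)
    {S : Matrix (Fin d) (Fin d) ℝ} (hS : IsAdmissibleCov δ K S) {b : (Fin d → ℝ) → ℝ}
    (hb : Measurable b) (hb₁ : ∀ v, |b v| ≤ 1) (u : Fin d → ℝ) :
    Integrable (fun v => b v * gaussianPDF d S (v - u)) := by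
  have hdom : Integrable (fun v : Fin d → ℝ => (2 * Real.pi) ^ (-(d : ℝ) / 2) * (√(δ ^ d))⁻¹ *
      Real.exp (-(δ / (K * d) ^ 2 / 4) * ∑ i, (v - u) i ^ 2)) :=
    ((integrable_exp_neg_mul_sum_sq (by positivity)).comp_sub_right u).const_mul _
  refine hdom.mono' (hb.mul ((measurable_gaussianPDF S).comp
    (measurable_id.sub_const u))).aestronglyMeasurable (ae_of_all _ fun v => ?_)
  rw [Real.norm_eq_abs, abs_mul]
  exact (mul_le_of_le_one_left (abs_nonneg _) (hb₁ v)).trans (abs_gaussianPDF_le hS hδ (v - u))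

theorem exists_abs_gaussianPDF_sub_le (hd : 0 < d) (hδ : 0 < δ) (hK : 0 < K) :
    ∃ C > 0, ∃ c > 0, ∀ (S T : Matrix (Fin d) (Fin d) ℝ) (ε : ℝ),
      IsAdmissibleCov δ K S → IsAdmissibleCov δ K T → 0 ≤ ε →
      (∀ i j, |S i j - T i j| ≤ ε) → ∀ x,
        |gaussianPDF d S x - gaussianPDF d T x| ≤ C * ε * Real.exp (-c * ∑ i, x i ^ 2) := by
  set m := δ / (K * d) ^ 2
  set c₀ := (2 * Real.pi) ^ (-(d : ℝ) / 2)
  set D := (d.factorial : ℝ) * d * max K 1 ^ d / (2 * √(δ ^ d) * δ ^ d)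
  refine ⟨c₀ * (D + (√(δ ^ d))⁻¹ * (2 * (d ^ 3 / δ ^ 2) / m)), by positivity, m / 4,
    by positivity, fun S T ε hS hT hε hST x => ?_⟩
  set E := Real.exp (-(m / 4) * ∑ i, x i ^ 2)
  set sS := S.det ^ (-(1 : ℝ) / 2)
  set sT := T.det ^ (-(1 : ℝ) / 2)
  set eS := Real.exp (-(1 / 2) * (x ⬝ᵥ S⁻¹ *ᵥ x))
  set eT := Real.exp (-(1 / 2) * (x ⬝ᵥ T⁻¹ *ᵥ x))
  have hs : |sS - sT| ≤ D * ε := by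
    have := hS.abs_det_rpow_sub_le hT hδ hST
    simp only [Fintype.card_fin] at this
    exact this.trans_eq (by ring)
  have hsT : sT ≤ (√(δ ^ d))⁻¹ := by simpa using hT.det_rpow_neg_half_le hδ
  have hsT₀ : 0 ≤ sT := Real.rpow_nonneg (hT.det_pos hδ).le _
  have heS : eS ≤ E := exp_neg_half_inv_quadForm_le hS hδ x
  have he : |eS - eT| ≤ 2 * (d ^ 3 / δ ^ 2 * ε) / m * E :=
    abs_exp_neg_half_inv_quadForm_sub_le hd hδ hK hS hT hε hST x
  calc |gaussianPDF d S x - gaussianPDF d T x|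
        = |c₀ * ((sS - sT) * eS) + c₀ * (sT * (eS - eT))| := by
        congr 1; simp only [gaussianPDF]; ring
    _ ≤ c₀ * (|sS - sT| * eS) + c₀ * (sT * |eS - eT|) := by
        refine (abs_add_le _ _).trans_eq ?_
        rw [abs_mul, abs_mul, abs_mul, abs_mul, abs_of_pos (by positivity), abs_of_nonneg hsT₀,
          abs_of_pos (Real.exp_pos _)]
    _ ≤ c₀ * (D * ε * E) + c₀ * ((√(δ ^ d))⁻¹ * (2 * (d ^ 3 / δ ^ 2 * ε) / m * E)) := by gcongr
    _ = _ := by ring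

theorem exists_abs_mhProb_sub_le (hd : 0 < d) (hδ : 0 < δ) (hK : 0 < K) :
    ∃ C > 0, ∀ a : (Fin d → ℝ) × (Fin d → ℝ) → ℝ, Measurable a → (∀ p, a p ∈ Set.Icc (0 : ℝ) 1) →
      ∀ (S T : Matrix (Fin d) (Fin d) ℝ) (ε : ℝ),
      IsAdmissibleCov δ K S → IsAdmissibleCov δ K T → 0 ≤ ε → (∀ i j, |S i j - T i j| ≤ ε) →
      ∀ u A, |mhProb d a S u A - mhProb d a T u A| ≤ C * ε := by
  obtain ⟨C, hC, c, hc, hpdf⟩ := exists_abs_gaussianPDF_sub_le hd hδ hK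
  set I := ∫ x : Fin d → ℝ, Real.exp (-c * ∑ i, x i ^ 2)
  have hI : 0 < I := integral_exp_pos (integrable_exp_neg_mul_sum_sq hc)
  refine ⟨2 * C * I, by positivity, fun a ha hab S T ε hS hT hε hST u A => ?_⟩
  have hau (v : Fin d → ℝ) : |a (u, v)| ≤ 1 :=
    abs_le.mpr ⟨by linarith [(hab (u, v)).1], (hab (u, v)).2⟩
  have hint {S : Matrix (Fin d) (Fin d) ℝ} (hS : IsAdmissibleCov δ K S) :=
    integrable_mul_gaussianPDF_sub hd hδ hK hS (ha.comp measurable_prodMk_left) hau u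
  have hL1 : ∫ v, |a (u, v) * gaussianPDF d S (v - u) - a (u, v) * gaussianPDF d T (v - u)| ≤
      C * ε * I := by
    calc _ ≤ ∫ v, C * ε * Real.exp (-c * ∑ i, (v - u) i ^ 2) := by
          refine integral_mono ((hint hS).sub (hint hT)).abs
            (((integrable_exp_neg_mul_sum_sq hc).comp_sub_right u).const_mul _) fun v => ?_
          rw [← mul_sub, abs_mul]
          exact (mul_le_of_le_one_left (abs_nonneg _) (hau v)).trans
            (hpdf S T ε hS hT hε hST (v - u))
      _ = C * ε * I := by
          rw [integral_const_mul,
            integral_sub_right_eq_self (fun w : Fin d → ℝ => Real.exp (-c * ∑ i, w i ^ 2)) u]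
  calc _ ≤ 2 * ∫ v, |a (u, v) * gaussianPDF d S (v - u) - a (u, v) * gaussianPDF d T (v - u)| :=
        abs_setIntegral_add_indicator_sub_le (hint hS) (hint hT) A u
    _ ≤ 2 * (C * ε * I) := by gcongr
    _ = _ := by ring

end gaussian

section empirical

variable {d : ℕ} {δ R : ℝ} {x : ℕ → Fin d → ℝ}

lemma abs_apply_le_eucNorm (y : Fin d → ℝ) (j : Fin d) : |y j| ≤ eucNorm y := by
  rw [eucNorm, ← Real.sqrt_sq_eq_abs]
  exact Real.sqrt_le_sqrt (single_le_sum (fun k _ => sq_nonneg (y k)) (mem_univ j))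

lemma natCast_smul_empMean (m : ℕ) : (m : ℝ) • empMean d m x = ∑ k ∈ range m, x k := by
  rcases eq_or_ne m 0 with rfl | hm
  · simp
  · rw [empMean, smul_inv_smul₀ (Nat.cast_ne_zero.mpr hm)]

lemma empMean_succ_sub (n : ℕ) :
    empMean d (n + 1) x - empMean d n x = ((n : ℝ) + 1)⁻¹ • (x n - empMean d n x) := by
  have h := natCast_smul_empMean (x := x) (n + 1)
  rw [sum_range_succ, ← natCast_smul_empMean n, Nat.cast_succ] at h
  rw [eq_inv_smul_iff₀ (by positivity), smul_sub, h]
  module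

lemma abs_empMean_apply_le {m : ℕ} (hR : 0 ≤ R) (hx : ∀ k ∈ range m, ∀ j, |x k j| ≤ R)
    (j : Fin d) : |empMean d m x j| ≤ R := by
  have hsum : |∑ k ∈ range m, x k j| ≤ m * R :=
    (abs_sum_le_sum_abs _ _).trans ((sum_le_sum fun k hk => hx k hk j).trans_eq (by simp))
  rcases eq_or_ne m 0 with rfl | hm
  · simpa [empMean] using hR
  · rw [empMean, Pi.smul_apply, Finset.sum_apply, smul_eq_mul, abs_mul, abs_inv, Nat.abs_cast,
      inv_mul_le_iff₀ (by positivity)]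
    exact hsum

lemma abs_sub_empMean_apply_le {m k : ℕ} (hR : 0 ≤ R) (hx : ∀ k ∈ range m, ∀ j, |x k j| ≤ R)
    (hk : k ∈ range m) (j : Fin d) : |x k j - empMean d m x j| ≤ 2 * R := by
  linarith [abs_sub (x k j) (empMean d m x j), hx k hk j, abs_empMean_apply_le hR hx j]

lemma abs_empMean_succ_sub_apply_le {n : ℕ} (hR : 0 ≤ R)
    (hx : ∀ k ∈ range (n + 1), ∀ j, |x k j| ≤ R) (j : Fin d) :
    |empMean d (n + 1) x j - empMean d n x j| ≤ 2 * R / (n + 1) := by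
  have hxn : ∀ k ∈ range n, ∀ j, |x k j| ≤ R := fun k hk =>
    hx k (range_subset_range.mpr n.le_succ hk)
  rw [← Pi.sub_apply, empMean_succ_sub, Pi.smul_apply, smul_eq_mul, abs_mul,
    abs_of_pos (by positivity), inv_mul_le_iff₀ (by positivity), mul_div_cancel₀ _ (by positivity),
    Pi.sub_apply]
  linarith [abs_sub (x n j) (empMean d n x j), hx n (self_mem_range_succ n) j,
    abs_empMean_apply_le hR hxn j]

noncomputable def empScatter (d m : ℕ) (x : ℕ → Fin d → ℝ) : Matrix (Fin d) (Fin d) ℝ :=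
  ∑ k ∈ range m, vecMulVec (x k - empMean d m x) (x k - empMean d m x)

lemma empCov_eq (m : ℕ) : empCov d m δ x = ((m : ℝ) - 1)⁻¹ • empScatter d m x + δ • 1 := rfl

lemma empScatter_apply (m : ℕ) (i j : Fin d) : empScatter d m x i j =
    ∑ k ∈ range m, (x k i - empMean d m x i) * (x k j - empMean d m x j) := by
  simp [empScatter, Matrix.sum_apply, vecMulVec_apply]

lemma posSemidef_empScatter (m : ℕ) : (empScatter d m x).PosSemidef :=
  posSemidef_sum _ fun k _ => by
    simpa using posSemidef_vecMulVec_self_star (x k - empMean d m x)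

lemma abs_centered_mul_le {m k : ℕ} (hR : 0 ≤ R) (hx : ∀ k ∈ range m, ∀ j, |x k j| ≤ R)
    (hk : k ∈ range m) (i j : Fin d) :
    |(x k i - empMean d m x i) * (x k j - empMean d m x j)| ≤ 4 * R ^ 2 := by
  rw [abs_mul]
  nlinarith [abs_sub_empMean_apply_le hR hx hk i, abs_sub_empMean_apply_le hR hx hk j,
    abs_nonneg (x k i - empMean d m x i), abs_nonneg (x k j - empMean d m x j)]

lemma abs_empScatter_apply_le {m : ℕ} (hR : 0 ≤ R) (hx : ∀ k ∈ range m, ∀ j, |x k j| ≤ R)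
    (i j : Fin d) : |empScatter d m x i j| ≤ m * (4 * R ^ 2) := by
  rw [empScatter_apply]
  exact (abs_sum_le_sum_abs _ _).trans
    ((sum_le_sum fun k hk => abs_centered_mul_le hR hx hk i j).trans_eq (by simp))

lemma empCov_isAdmissibleCov {m : ℕ} (hδ : 0 ≤ δ) (hm : 2 ≤ m) (hR : 0 ≤ R)
    (hx : ∀ k ∈ range m, ∀ j, |x k j| ≤ R) :
    IsAdmissibleCov δ (δ + 8 * R ^ 2) (empCov d m δ x) := by
  have hm' : (2 : ℝ) ≤ m := by exact_mod_cast hm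
  have hc : 0 ≤ ((m : ℝ) - 1)⁻¹ := inv_nonneg.mpr (by linarith)
  have hP := posSemidef_empScatter (x := x) m
  refine ⟨?_, fun y => ?_, fun i j => ?_⟩
  · rw [empCov_eq]
    exact ((hP.smul hc).add (PosSemidef.one.smul hδ)).isHermitian
  · have := hP.dotProduct_mulVec_nonneg y
    rw [star_trivial] at this
    rw [empCov_eq, add_mulVec, smul_mulVec, smul_mulVec, one_mulVec, dotProduct_add,
      dotProduct_smul, dotProduct_smul, smul_eq_mul, smul_eq_mul]
    have hyy : y ⬝ᵥ y = ∑ i, y i ^ 2 := by simp [dotProduct, sq]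
    rw [hyy]
    nlinarith [mul_nonneg hc this]
  · rw [empCov_eq, Matrix.add_apply, Matrix.smul_apply, Matrix.smul_apply, smul_eq_mul,
      smul_eq_mul]
    have hscat : |((m : ℝ) - 1)⁻¹ * empScatter d m x i j| ≤ 8 * R ^ 2 := by
      rw [abs_mul, abs_of_nonneg hc, inv_mul_le_iff₀ (by linarith)]
      nlinarith [abs_empScatter_apply_le hR hx i j]
    have hone : |δ * (1 : Matrix (Fin d) (Fin d) ℝ) i j| ≤ δ := by
      rw [one_apply]; split_ifs <;> simp [abs_of_nonneg hδ, hδ]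
    linarith [abs_add_le (((m : ℝ) - 1)⁻¹ * empScatter d m x i j)
      (δ * (1 : Matrix (Fin d) (Fin d) ℝ) i j)]

lemma abs_sum_centered_mul_sub_le {n : ℕ} (hR : 0 ≤ R)
    (hx : ∀ k ∈ range (n + 1), ∀ j, |x k j| ≤ R) (i j : Fin d) :
    |∑ k ∈ range n, (x k i - empMean d n x i) * (x k j - empMean d n x j) -
      ∑ k ∈ range n, (x k i - empMean d (n + 1) x i) * (x k j - empMean d (n + 1) x j)| ≤
      8 * R ^ 2 := by
  set μ := empMean d n x
  set ν := empMean d (n + 1) x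
  have hxn : ∀ k ∈ range n, ∀ j, |x k j| ≤ R := fun k hk =>
    hx k (range_subset_range.mpr n.le_succ hk)
  have hμν (l : Fin d) : |ν l - μ l| ≤ 2 * R / (n + 1) := abs_empMean_succ_sub_apply_le hR hx l
  have hterm (k : ℕ) (hk : k ∈ range n) :
      |(x k i - μ i) * (x k j - μ j) - (x k i - ν i) * (x k j - ν j)| ≤ 8 * R ^ 2 / (n + 1) := by
    rw [show (x k i - μ i) * (x k j - μ j) - (x k i - ν i) * (x k j - ν j) =
      (ν i - μ i) * (x k j - μ j) + (x k i - ν i) * (ν j - μ j) by ring]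
    refine (abs_add_le _ _).trans ?_
    rw [abs_mul, abs_mul]
    calc _ ≤ 2 * R / (n + 1) * (2 * R) + 2 * R * (2 * R / (n + 1)) := by
          gcongr
          exacts [hμν i, abs_sub_empMean_apply_le hR hxn hk j,
            abs_sub_empMean_apply_le hR hx (range_subset_range.mpr n.le_succ hk) i, hμν j]
      _ = 8 * R ^ 2 / (n + 1) := by ring
  rw [← sum_sub_distrib]
  calc _ ≤ ∑ _k ∈ range n, 8 * R ^ 2 / (n + 1) := (abs_sum_le_sum_abs _ _).trans (sum_le_sum hterm)
    _ ≤ 8 * R ^ 2 := by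
        rw [sum_const, card_range, nsmul_eq_mul, mul_div_assoc', div_le_iff₀ (by positivity)]
        nlinarith [sq_nonneg R]

lemma abs_empCov_sub_apply_le {n : ℕ} (hn : 2 ≤ n) (hR : 0 ≤ R)
    (hx : ∀ k ∈ range (n + 1), ∀ j, |x k j| ≤ R) (i j : Fin d) :
    |empCov d n δ x i j - empCov d (n + 1) δ x i j| ≤ 20 * R ^ 2 / n := by
  have hn' : (2 : ℝ) ≤ n := by exact_mod_cast hn
  set P := ∑ k ∈ range n, (x k i - empMean d n x i) * (x k j - empMean d n x j)
  set Q := ∑ k ∈ range n, (x k i - empMean d (n + 1) x i) * (x k j - empMean d (n + 1) x j)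
  set q := (x n i - empMean d (n + 1) x i) * (x n j - empMean d (n + 1) x j)
  have hP : |P| ≤ n * (4 * R ^ 2) := by
    simpa only [empScatter_apply] using
      abs_empScatter_apply_le hR (fun k hk => hx k (range_subset_range.mpr n.le_succ hk)) i j
  have hq : |q| ≤ 4 * R ^ 2 := abs_centered_mul_le hR hx (self_mem_range_succ n) i j
  have hdecomp : empCov d n δ x i j - empCov d (n + 1) δ x i j =
      ((n - 1 : ℝ)⁻¹ - (n : ℝ)⁻¹) * P + (n : ℝ)⁻¹ * (P - Q) - (n : ℝ)⁻¹ * q := by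
    simp only [empCov_eq, Matrix.add_apply, Matrix.smul_apply, smul_eq_mul, empScatter_apply,
      sum_range_succ, P, Q, q]
    push_cast
    ring
  have h₁ : |((n - 1 : ℝ)⁻¹ - (n : ℝ)⁻¹) * P| ≤ 8 * R ^ 2 / n := by
    have hn₁ : (0 : ℝ) < n - 1 := by linarith
    have hc : 0 < (n - 1 : ℝ) * n := mul_pos hn₁ (by linarith)
    rw [show (n - 1 : ℝ)⁻¹ - (n : ℝ)⁻¹ = ((n - 1 : ℝ) * n)⁻¹ by field_simp; ring, abs_mul,
      abs_of_pos (inv_pos.mpr hc), inv_mul_le_iff₀ hc]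
    calc |P| ≤ n * (4 * R ^ 2) := hP
      _ ≤ (n - 1 : ℝ) * n * (8 * R ^ 2 / n) := by
          field_simp
          nlinarith [sq_nonneg R]
  have h₂ : |(n : ℝ)⁻¹ * (P - Q)| ≤ 8 * R ^ 2 / n := by
    rw [abs_mul, abs_of_pos (by positivity), inv_mul_eq_div]
    gcongr
    exact abs_sum_centered_mul_sub_le hR hx i j
  have h₃ : |(n : ℝ)⁻¹ * q| ≤ 4 * R ^ 2 / n := by
    rw [abs_mul, abs_of_pos (by positivity), inv_mul_eq_div]
    gcongr
  rw [hdecomp]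
  calc _ ≤ 8 * R ^ 2 / n + 8 * R ^ 2 / n + 4 * R ^ 2 / n :=
        (abs_sub _ _).trans (add_le_add ((abs_add_le _ _).trans (add_le_add h₁ h₂)) h₃)
    _ = _ := by ring

end empirical

/-- Finite-dimensional diminishing adaptation: for the adaptive Metropolis kernels
`Q_n` built from regularized empirical covariances of points of norm at most `R`,
there is `γ > 0`, depending only on `d`, `R`, `δ`, with
`|Q_n(u, A) − Q_{n+1}(u, A)| ≤ γ/n` for all `n ≥ 2`, all states `u` and all
measurable sets `A`. -/
theorem diminishing_adaptation
    (d : ℕ) (hd : 0 < d) (R δ : ℝ) (hR : 0 < R) (hδ : 0 < δ) :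
    ∃ γ > 0, ∀ a : (Fin d → ℝ) × (Fin d → ℝ) → ℝ,
      Measurable a → (∀ p, a p ∈ Set.Icc (0 : ℝ) 1) →
      ∀ n : ℕ, 2 ≤ n →
      ∀ x : ℕ → Fin d → ℝ, (∀ i ∈ Finset.range (n + 1), eucNorm (x i) ≤ R) →
      ∀ u : Fin d → ℝ, ∀ A : Set (Fin d → ℝ), MeasurableSet A →
        |mhProb d a (empCov d n δ x) u A - mhProb d a (empCov d (n + 1) δ x) u A| ≤
          γ / n := by
  obtain ⟨C, hC, hQ⟩ := exists_abs_mhProb_sub_le hd hδ (K := δ + 8 * R ^ 2) (by positivity)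
  refine ⟨C * (20 * R ^ 2), by positivity, fun a ha hau n hn x hx u A _ => ?_⟩
  have hxn₁ : ∀ k ∈ range (n + 1), ∀ j, |x k j| ≤ R := fun k hk j =>
    (abs_apply_le_eucNorm (x k) j).trans (hx k hk)
  have hxn : ∀ k ∈ range n, ∀ j, |x k j| ≤ R := fun k hk =>
    hxn₁ k (range_subset_range.mpr n.le_succ hk)
  calc _ ≤ C * (20 * R ^ 2 / n) :=
        hQ a ha hau _ _ _ (empCov_isAdmissibleCov hδ.le hn hR.le hxn)
          (empCov_isAdmissibleCov hδ.le (by omega) hR.le hxn₁) (by positivity)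
          (abs_empCov_sub_apply_le hn hR.le hxn₁) u A
    _ = C * (20 * R ^ 2) / n := by ring
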